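/- The number of states of the existential region automaton of an ECTA A with m locations, alphabet Σ and maximal constant cmax is at most m · R(2|Σ|, cmax+1), where R(n,c) = n! · 2^n · (2c+2)^n; in particular the existential region automaton is a finite automaton. -/

import Mathlib

/-- Event clocks over alphabet `α`: a history clock and a prophecy clock per letter. -/
inductive Clock (α : Type) where
  | hist (a : α)
  | proph (a : α)
deriving DecidableEq

/-- A valuation assigns to each event clock a real value or `⊥` (here `none`). -/
def Val (α : Type) := Clock α → Option ℝ

/-- All defined clock values are nonnegative. -/
def Nonneg {α : Type} (v : Val α) : Prop := ∀ x r, v x = some r → 0 ≤ r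

/-- `v[x := d]`. -/
def Val.set {α : Type} [DecidableEq α] (v : Val α) (x : Clock α) (d : Option ℝ) : Val α :=
  fun y => if y = x then d else v y

/-- Time elapse: history clocks increase, prophecy clocks decrease; `⊥` unaffected. -/
def elapse {α : Type} (v : Val α) (t : ℝ) : Val α := fun c =>
  match c with
  | .hist a => (v (.hist a)).map (· + t)
  | .proph a => (v (.proph a)).map (· - t)

/-- Time elapse by `t` is allowed: `t ≥ 0` and all prophecy clocks are at least `t`. -/
def CanElapse {α : Type} (v : Val α) (t : ℝ) : Prop :=
  0 ≤ t ∧ ∀ a r, v (.proph a) = some r → t ≤ r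

def InitialVal {α : Type} (v : Val α) : Prop := ∀ a, v (.hist a) = none

def FinalVal {α : Type} (v : Val α) : Prop := ∀ a, v (.proph a) = none

/-- Clock constraints: Boolean combinations of atomic constraints `x ∼ c`. -/
inductive Constr (α : Type) where
  | tt
  | lt (x : Clock α) (c : ℕ)
  | gt (x : Clock α) (c : ℕ)
  | eq (x : Clock α) (c : ℕ)
  | not (ψ : Constr α)
  | and (ψ₁ ψ₂ : Constr α)

def Constr.sat {α : Type} (v : Val α) : Constr α → Prop
  | .tt => True
  | .lt x c => ∃ r, v x = some r ∧ r < (c : ℝ)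
  | .gt x c => ∃ r, v x = some r ∧ (c : ℝ) < r
  | .eq x c => v x = some (c : ℝ)
  | .not ψ => ¬ Constr.sat v ψ
  | .and ψ₁ ψ₂ => Constr.sat v ψ₁ ∧ Constr.sat v ψ₂

/-- An event-clock automaton. -/
structure ECTA (α Q : Type) where
  init : Q
  edges : Set (Q × α × Constr α × Q)
  accept : Set Q

/-- Discrete step on letter `σ`: there is a nonnegative valuation `v̄` with
`v̄[→σ := 0] = v`, `v̄[←σ := 0] = v'` and `v̄ ⊨ ψ` for some edge `(q,σ,ψ,q')`. -/
def DStep {α Q : Type} [DecidableEq α] (A : ECTA α Q) (q : Q) (v : Val α) (σ : α)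
    (q' : Q) (v' : Val α) : Prop :=
  ∃ ψ, (q, σ, ψ, q') ∈ A.edges ∧
    ∃ vb : Val α, Nonneg vb ∧
      vb.set (.proph σ) (some 0) = v ∧
      vb.set (.hist σ) (some 0) = v' ∧
      Constr.sat vb ψ

/-- Combined step: elapse `t`, then fire a `σ`-edge. -/
def TStep {α Q : Type} [DecidableEq α] (A : ECTA α Q) (q : Q) (v : Val α) (t : ℝ) (σ : α)
    (q' : Q) (v' : Val α) : Prop :=
  CanElapse v t ∧ DStep A q (elapse v t) σ q' v'

/-- Acceptance of a timed word (given by successive delays) from state `(q,v)`. -/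
inductive ECAcc {α Q : Type} [DecidableEq α] (A : ECTA α Q) : Q → Val α → List (ℝ × α) → Prop where
  | nil : ∀ q v, q ∈ A.accept → FinalVal v → ECAcc A q v []
  | cons : ∀ q v t σ q' v' w, TStep A q v t σ q' v' → ECAcc A q' v' w → ECAcc A q v ((t, σ) :: w)

/-- `Untime(L(A,(q,v)))`. -/
def UntimedLangFrom {α Q : Type} [DecidableEq α] (A : ECTA α Q) (q : Q) (v : Val α) :
    Set (List α) :=
  { w | ∃ θ : List (ℝ × α), ECAcc A q v θ ∧ θ.map Prod.snd = w }

/-- The timed language of `A` (initialized runs). -/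
def TLang {α Q : Type} [DecidableEq α] (A : ECTA α Q) : Set (List (ℝ × α)) :=
  { θ | ∃ v, Nonneg v ∧ InitialVal v ∧ ECAcc A A.init v θ }

/-- `Untime(L(A))`. -/
def UntimedLang {α Q : Type} [DecidableEq α] (A : ECTA α Q) : Set (List α) :=
  { w | ∃ v, Nonneg v ∧ InitialVal v ∧ w ∈ UntimedLangFrom A A.init v }
/-- Distance to the relevant integer boundary: `⌈r⌉ − r` for history clocks,
`r − ⌊r⌋` for prophecy clocks. -/
noncomputable def fracDist {α : Type} : Clock α → ℝ → ℝ
  | .hist _, r => (⌈r⌉ : ℝ) - r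
  | .proph _, r => r - (⌊r⌋ : ℝ)

/-- Signed value used for diagonal constraints: prophecy clocks are negated. -/
def sval {α : Type} : Clock α → ℝ → ℝ
  | .hist _, r => r
  | .proph _, r => -r

/-- The Alur–Dill region equivalence with maximal constant `cmax`. -/
def RegEq {α : Type} (cmax : ℕ) (v₁ v₂ : Val α) : Prop :=
  (∀ x, v₁ x = none ↔ v₂ x = none) ∧
  (∀ x r₁ r₂, v₁ x = some r₁ → v₂ x = some r₂ →
      (((cmax : ℝ) < r₁ ∧ (cmax : ℝ) < r₂) ∨ (⌈r₁⌉ = ⌈r₂⌉ ∧ ⌊r₁⌋ = ⌊r₂⌋))) ∧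
  (∀ x y rx₁ ry₁ rx₂ ry₂, v₁ x = some rx₁ → v₁ y = some ry₁ →
      v₂ x = some rx₂ → v₂ y = some ry₂ → rx₁ ≤ (cmax : ℝ) → ry₁ ≤ (cmax : ℝ) →
      (fracDist x rx₁ ≤ fracDist y ry₁ ↔ fracDist x rx₂ ≤ fracDist y ry₂))

/-- The refined (Bouyer-style) region equivalence. -/
def RegEqD {α : Type} (cmax : ℕ) (v₁ v₂ : Val α) : Prop :=
  RegEq cmax v₁ v₂ ∧
  (∀ x y rx₁ ry₁ rx₂ ry₂, v₁ x = some rx₁ → v₁ y = some ry₁ →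
      v₂ x = some rx₂ → v₂ y = some ry₂ →
      ((cmax : ℝ) < rx₁ ∨ (cmax : ℝ) < ry₁) →
      ((2 * (cmax : ℝ) < |sval x rx₁ - sval y ry₁| ∧ 2 * (cmax : ℝ) < |sval x rx₂ - sval y ry₂|) ∨
       (⌊sval x rx₁ - sval y ry₁⌋ = ⌊sval x rx₂ - sval y ry₂⌋ ∧
        ⌈sval x rx₁ - sval y ry₁⌉ = ⌈sval x rx₂ - sval y ry₂⌉)))

/-- A region of an equivalence `E`: an equivalence class of nonnegative valuations. -/
def IsRegionOf {α : Type} (E : Val α → Val α → Prop) (r : Set (Val α)) : Prop :=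
  ∃ v, Nonneg v ∧ r = { v' | Nonneg v' ∧ E v v' }

def InitialRegion {α : Type} (r : Set (Val α)) : Prop := ∀ v ∈ r, InitialVal v
def FinalRegion {α : Type} (r : Set (Val α)) : Prop := ∀ v ∈ r, FinalVal v

/-- Acceptance in the universal region automaton `RA(∀,E,A)`. -/
inductive UAcc {α Q : Type} [DecidableEq α] (A : ECTA α Q) (E : Val α → Val α → Prop) :
    Q → Set (Val α) → List α → Prop where
  | nil : ∀ q r, q ∈ A.accept → IsRegionOf E r → FinalRegion r → UAcc A E q r []
  | cons : ∀ q r σ q' r' w, IsRegionOf E r → IsRegionOf E r' →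
      (∀ v ∈ r, ∃ t v', v' ∈ r' ∧ TStep A q v t σ q' v') →
      UAcc A E q' r' w → UAcc A E q r (σ :: w)

/-- Acceptance in the existential region automaton `RA(∃,E,A)`. -/
inductive EAcc {α Q : Type} [DecidableEq α] (A : ECTA α Q) (E : Val α → Val α → Prop) :
    Q → Set (Val α) → List α → Prop where
  | nil : ∀ q r, q ∈ A.accept → IsRegionOf E r → FinalRegion r → EAcc A E q r []
  | cons : ∀ q r σ q' r' w, IsRegionOf E r → IsRegionOf E r' →
      (∃ v ∈ r, ∃ t v', v' ∈ r' ∧ TStep A q v t σ q' v') →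
      EAcc A E q' r' w → EAcc A E q r (σ :: w)

/-- The language of the universal region automaton. -/
def ULang {α Q : Type} [DecidableEq α] (A : ECTA α Q) (E : Val α → Val α → Prop) :
    Set (List α) :=
  { w | ∃ r, IsRegionOf E r ∧ InitialRegion r ∧ UAcc A E A.init r w }

/-- The language of the existential region automaton. -/
def ELang {α Q : Type} [DecidableEq α] (A : ECTA α Q) (E : Val α → Val α → Prop) :
    Set (List α) :=
  { w | ∃ r, IsRegionOf E r ∧ InitialRegion r ∧ EAcc A E A.init r w }

/-- All constants in a constraint are at most `k`. -/
def Constr.BoundedBy {α : Type} (k : ℕ) : Constr α → Prop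
  | .tt => True
  | .lt _ c => c ≤ k
  | .gt _ c => c ≤ k
  | .eq _ c => c ≤ k
  | .not ψ => Constr.BoundedBy k ψ
  | .and ψ₁ ψ₂ => Constr.BoundedBy k ψ₁ ∧ Constr.BoundedBy k ψ₂

/-- `cmax` bounds all constants appearing in the guards of `A`. -/
def MaxConstLe {α Q : Type} (A : ECTA α Q) (k : ℕ) : Prop :=
  ∀ e ∈ A.edges, Constr.BoundedBy k e.2.2.1

/-- `R(n,c) = n! · 2ⁿ · (2c+2)ⁿ`, the Alur–Dill bound on the number of regions. -/
def Rbound (n c : ℕ) : ℕ := n.factorial * 2 ^ n * (2 * c + 2) ^ n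


/-!
A region of `RegEq cmax` is determined by any of its valuations `v` through finite data: for
each clock, whether it is `⊥`, above `cmax`, or else its floor and whether it is an integer
(`2 (cmax + 1) + 2` choices), together with the total preorder of the fractional distances.
Linearizing that preorder by a fixed tie-break on the clocks and marking the first clock of
each tie class encodes it by an injection of the `n = 2|Σ|` clocks into `Fin n` plus `n` bits,
which leaves at most `n! · 2ⁿ · (2 (cmax + 1) + 2)ⁿ` regions.
-/

open Finset Function

section Rank

variable {X L : Type*} [Fintype X] [LinearOrder L] {κ : X → L} {x y : X}

def rankBy (κ : X → L) (x : X) : ℕ := #{z | κ z < κ x}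

lemma rankBy_lt_card (κ : X → L) (x : X) : rankBy κ x < Fintype.card X :=
  card_lt_card <| filter_ssubset.mpr ⟨x, mem_univ x, lt_irrefl _⟩

lemma rankBy_le_rankBy (h : κ x ≤ κ y) : rankBy κ x ≤ rankBy κ y :=
  card_le_card <| monotone_filter_right _ fun _ _ hz => hz.trans_le h

lemma rankBy_lt_rankBy (h : κ x < κ y) : rankBy κ x < rankBy κ y :=
  card_lt_card <| (ssubset_iff_of_subset <| monotone_filter_right _ fun _ _ hz => hz.trans h).mpr
    ⟨x, by simp [h], by simp⟩

lemma rankBy_lt_rankBy_iff : rankBy κ x < rankBy κ y ↔ κ x < κ y :=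
  ⟨fun h => lt_of_not_ge fun h' => (rankBy_le_rankBy h').not_gt h, rankBy_lt_rankBy⟩

lemma rankBy_injective (hκ : Injective κ) : Injective (rankBy κ) := by
  intro x y h
  rcases lt_trichotomy (κ x) (κ y) with hxy | hxy | hxy
  · exact absurd h (rankBy_lt_rankBy hxy).ne
  · exact hκ hxy
  · exact absurd h (rankBy_lt_rankBy hxy).ne'

def rankEmbedding (hκ : Injective κ) : X ↪ Fin (Fintype.card X) :=
  ⟨fun x => ⟨rankBy κ x, rankBy_lt_card κ x⟩, fun _ _ h => rankBy_injective hκ (Fin.mk.inj h)⟩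

lemma rankEmbedding_lt_iff (hκ : Injective κ) :
    rankEmbedding hκ x < rankEmbedding hκ y ↔ κ x < κ y :=
  Fin.lt_def.trans rankBy_lt_rankBy_iff

end Rank

section TieBreak

variable {X β γ : Type*}

def tieKey (e : X → γ) (f : X → β) (x : X) : β ×ₗ γ := toLex (f x, e x)

lemma tieKey_injective {e : X → γ} (he : Injective e) (f : X → β) : Injective (tieKey e f) :=
  fun _ _ h => he (congrArg (fun p => (ofLex p).2) h)

variable [LinearOrder β] [LinearOrder γ] (e : X → γ)

def IsClassLeast (f : X → β) (x : X) : Prop := ∀ z, f z = f x → e x ≤ e z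

variable {e} [Finite X] {f g : X → β}

/-- The preorder `f x ≤ f y` is recovered from its linearization by the tie-break `e`
together with the `e`-least elements of its classes. -/
lemma le_of_tieKey_of_isClassLeast
    (hkey : ∀ x y, tieKey e f x < tieKey e f y ↔ tieKey e g x < tieKey e g y)
    (hleast : ∀ x, IsClassLeast e f x ↔ IsClassLeast e g x) {x y : X} (hfxy : f x ≤ f y) :
    g x ≤ g y := by
  by_contra! hgyx
  have hkey_le : ∀ x y, tieKey e f x ≤ tieKey e f y ↔ tieKey e g x ≤ tieKey e g y :=
    fun x y => by simpa only [not_lt] using (hkey y x).not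
  -- `z`, the `e`-least element of the `g`-class of `x`, is squeezed into the `f`-class of `y`
  obtain ⟨z, hgz, hzmin⟩ := Set.exists_min_image {z | g z = g x} e (Set.toFinite _) ⟨x, rfl⟩
  have hleast_z : IsClassLeast e f z :=
    (hleast z).mpr fun z' hz' => hzmin z' (hz'.trans hgz)
  have hyz : tieKey e f y < tieKey e f z :=
    (hkey y z).mpr (Prod.Lex.toLex_lt_toLex.mpr (Or.inl (hgz ▸ hgyx)))
  have hzx : tieKey e f z ≤ tieKey e f x :=
    (hkey_le z x).mpr (Prod.Lex.toLex_le_toLex.mpr (Or.inr ⟨hgz, hzmin x rfl⟩))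
  have hfzy : f z = f y := by
    have h₁ : f y ≤ f z := Prod.Lex.monotone_fst _ _ hyz.le
    have h₂ : f z ≤ f x := Prod.Lex.monotone_fst _ _ hzx
    order
  rcases Prod.Lex.toLex_lt_toLex.mp hyz with h | ⟨_, h⟩
  · exact h.ne hfzy.symm
  · exact (hleast_z y hfzy.symm).not_gt h

lemma le_iff_of_tieKey_of_isClassLeast
    (hkey : ∀ x y, tieKey e f x < tieKey e f y ↔ tieKey e g x < tieKey e g y)
    (hleast : ∀ x, IsClassLeast e f x ↔ IsClassLeast e g x) (x y : X) :
    f x ≤ f y ↔ g x ≤ g y :=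
  ⟨le_of_tieKey_of_isClassLeast hkey hleast,
    le_of_tieKey_of_isClassLeast (fun x y => (hkey x y).symm) fun x => (hleast x).symm⟩

end TieBreak

def Clock.equivSum (α : Type) : Clock α ≃ α ⊕ α where
  toFun | .hist a => .inl a | .proph a => .inr a
  invFun | .inl a => .hist a | .inr a => .proph a
  left_inv c := by cases c <;> rfl
  right_inv s := by cases s <;> rfl

instance (α : Type) [Fintype α] : Fintype (Clock α) := Fintype.ofEquiv _ (Clock.equivSum α).symm

lemma Clock.card_eq (α : Type) [Fintype α] : Fintype.card (Clock α) = 2 * Fintype.card α := by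
  rw [Fintype.card_congr (Clock.equivSum α), Fintype.card_sum, two_mul]

section IntClass

/-- On `[0, cmax]` the floor and the integrality flag together fix the ceiling. -/
noncomputable def intClass (cmax : ℕ) (r : ℝ) : Option (Fin (cmax + 1) × Bool) :=
  if h : r ≤ cmax then some (⟨⌊r⌋₊, Nat.lt_succ_of_le (Nat.floor_le_of_le h)⟩, decide (⌈r⌉ = ⌊r⌋))
  else none

variable {cmax : ℕ} {r s u : ℝ}

lemma intClass_eq_none_iff : intClass cmax r = none ↔ (cmax : ℝ) < r := by
  unfold intClass; split_ifs with h <;> simpa using h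

lemma le_iff_le_of_intClass_eq (h : intClass cmax r = intClass cmax s) :
    r ≤ cmax ↔ s ≤ cmax := by
  simp only [← not_lt, ← intClass_eq_none_iff, h]

lemma floor_ceil_eq_of_intClass_eq (hr : 0 ≤ r) (hs : 0 ≤ s) (hrc : r ≤ cmax)
    (h : intClass cmax r = intClass cmax s) : ⌈r⌉ = ⌈s⌉ ∧ ⌊r⌋ = ⌊s⌋ := by
  have hsc : s ≤ cmax := (le_iff_le_of_intClass_eq h).mp hrc
  simp only [intClass, hrc, hsc, dite_true, Option.some.injEq, Prod.mk.injEq, Fin.mk.injEq,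
    decide_eq_decide] at h
  obtain ⟨hfloor, hint⟩ := h
  have hfloor' : ⌊r⌋ = ⌊s⌋ := by
    rw [← Int.natCast_floor_eq_floor hr, ← Int.natCast_floor_eq_floor hs, hfloor]
  have := Int.ceil_le_floor_add_one r
  have := Int.ceil_le_floor_add_one s
  have := Int.floor_le_ceil r
  have := Int.floor_le_ceil s
  refine ⟨?_, hfloor'⟩
  by_cases hr' : ⌈r⌉ = ⌊r⌋
  · have := hint.mp hr'; omega
  · have := mt hint.mpr hr'; omega

def SameIntPart (cmax : ℕ) (r s : ℝ) : Prop :=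
  ((cmax : ℝ) < r ∧ (cmax : ℝ) < s) ∨ (⌈r⌉ = ⌈s⌉ ∧ ⌊r⌋ = ⌊s⌋)

lemma SameIntPart.of_intClass_eq (hr : 0 ≤ r) (hs : 0 ≤ s)
    (h : intClass cmax r = intClass cmax s) (hru : SameIntPart cmax r u) :
    SameIntPart cmax s u := by
  by_cases hrc : r ≤ cmax
  · obtain ⟨hceil, hfloor⟩ := floor_ceil_eq_of_intClass_eq hr hs hrc h
    rcases hru with ⟨hr', _⟩ | ⟨hceil', hfloor'⟩
    · exact absurd hr' hrc.not_gt
    · exact Or.inr ⟨hceil ▸ hceil', hfloor ▸ hfloor'⟩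
  · have hsc : (cmax : ℝ) < s := not_le.mp ((le_iff_le_of_intClass_eq h).not.mp hrc)
    refine Or.inl ⟨hsc, ?_⟩
    rcases hru with ⟨_, hu⟩ | ⟨hceil, _⟩
    · exact hu
    · exact Int.lt_ceil.mp (hceil ▸ Int.lt_ceil.mpr (not_le.mp hrc))

end IntClass

section FracDist

variable {α : Type} {cmax : ℕ}

/-- Undefined clocks get the junk value `0`; `RegEq` only compares defined ones. -/
noncomputable def fracDistOf (v : Val α) (x : Clock α) : ℝ := fracDist x ((v x).getD 0)

lemma RegEq.of_intClass_of_fracDistOf {v w u : Val α} (hv : Nonneg v) (hw : Nonneg w)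
    (hint : ∀ x, (v x).map (intClass cmax) = (w x).map (intClass cmax))
    (hfd : ∀ x y, fracDistOf v x ≤ fracDistOf v y ↔ fracDistOf w x ≤ fracDistOf w y)
    (h : RegEq cmax v u) : RegEq cmax w u := by
  obtain ⟨hnone, hint_u, hfrac_u⟩ := h
  have hval : ∀ x r, w x = some r → ∃ r', v x = some r' ∧ intClass cmax r' = intClass cmax r :=
    fun x r hwx => Option.map_eq_some_iff.mp (by rw [hint x, hwx]; rfl)
  refine ⟨fun x => ?_, fun x rxw rxu hwx hux => ?_,
    fun x y rxw ryw rxu ryu hwx hwy hux huy hx hy => ?_⟩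
  · rw [← hnone x, ← Option.map_eq_none_iff (f := intClass cmax), ← hint x, Option.map_eq_none_iff]
  · obtain ⟨rxv, hvx, hrxv⟩ := hval x rxw hwx
    exact SameIntPart.of_intClass_eq (hv x rxv hvx) (hw x rxw hwx) hrxv (hint_u x rxv rxu hvx hux)
  · obtain ⟨rxv, hvx, hrxv⟩ := hval x rxw hwx
    obtain ⟨ryv, hvy, hryv⟩ := hval y ryw hwy
    have hfd_xy := hfd x y
    simp only [fracDistOf, hvx, hvy, hwx, hwy, Option.getD_some] at hfd_xy
    rw [← hfd_xy]
    exact hfrac_u x y rxv ryv rxu ryu hvx hvy hux huy ((le_iff_le_of_intClass_eq hrxv).mpr hx)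
      ((le_iff_le_of_intClass_eq hryv).mpr hy)

end FracDist

section Signature

variable {α : Type} [Fintype α] {cmax : ℕ}

noncomputable def clockIndex (α : Type) [Fintype α] : Clock α ≃ Fin (Fintype.card (Clock α)) :=
  Fintype.equivFin _

abbrev RegionSignature (α : Type) [Fintype α] (cmax : ℕ) : Type :=
  (Clock α ↪ Fin (Fintype.card (Clock α))) × (Clock α → Bool) ×
    (Clock α → Option (Option (Fin (cmax + 1) × Bool)))

open Classical in
noncomputable def regionSignature (cmax : ℕ) (v : Val α) : RegionSignature α cmax :=
  (rankEmbedding (tieKey_injective (clockIndex α).injective (fracDistOf v)),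
    fun x => decide (IsClassLeast (clockIndex α) (fracDistOf v) x),
    fun x => (v x).map (intClass cmax))

lemma fracDistOf_le_iff_of_regionSignature_eq {v w : Val α}
    (h : regionSignature cmax v = regionSignature cmax w) (x y : Clock α) :
    fracDistOf v x ≤ fracDistOf v y ↔ fracDistOf w x ≤ fracDistOf w y := by
  simp only [regionSignature, Prod.mk.injEq] at h
  obtain ⟨hrank, hleast, -⟩ := h
  refine le_iff_of_tieKey_of_isClassLeast (e := clockIndex α) (fun x y => ?_) (fun x => ?_) x y
  · simpa only [rankEmbedding_lt_iff, eq_iff_iff] using congrArg (fun ρ => ρ x < ρ y) hrank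
  · simpa only [decide_eq_decide] using congrFun hleast x

lemma regionOf_eq_of_regionSignature_eq {v w : Val α} (hv : Nonneg v) (hw : Nonneg w)
    (h : regionSignature cmax v = regionSignature cmax w) :
    {u | Nonneg u ∧ RegEq cmax v u} = {u | Nonneg u ∧ RegEq cmax w u} := by
  have hint : ∀ x, (v x).map (intClass cmax) = (w x).map (intClass cmax) :=
    congrFun (congrArg (fun σ : RegionSignature α cmax => σ.2.2) h)
  have hfd := fracDistOf_le_iff_of_regionSignature_eq h
  ext u
  exact and_congr_right fun _ =>
    ⟨RegEq.of_intClass_of_fracDistOf hv hw hint hfd,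
      RegEq.of_intClass_of_fracDistOf hw hv (fun x => (hint x).symm) fun x y => (hfd x y).symm⟩

lemma card_regionSignature :
    Nat.card (RegionSignature α cmax) = Rbound (2 * Fintype.card α) (cmax + 1) := by
  classical
  rw [Nat.card_eq_fintype_card]
  simp only [Fintype.card_prod, Fintype.card_embedding_eq, Fintype.card_fun, Fintype.card_fin,
    Fintype.card_option, Fintype.card_bool, Nat.descFactorial_self, Clock.card_eq, Rbound]
  ring

end Signature

theorem existential_region_automaton_size_general
    (α Q : Type) [Fintype α] [Fintype Q] (cmax : ℕ) :
    Finite (Q × { r : Set (Val α) // IsRegionOf (RegEq cmax) r }) ∧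
    Nat.card (Q × { r : Set (Val α) // IsRegionOf (RegEq cmax) r }) ≤
      Fintype.card Q * Rbound (2 * Fintype.card α) (cmax + 1) := by
  choose rep hrep hrep_eq using fun r : { r : Set (Val α) // IsRegionOf (RegEq cmax) r } => r.2
  have hinj : Injective fun r => regionSignature cmax (rep r) := fun r₁ r₂ h =>
    Subtype.ext <| by rw [hrep_eq, hrep_eq, regionOf_eq_of_regionSignature_eq (hrep r₁) (hrep r₂) h]
  have : Finite { r : Set (Val α) // IsRegionOf (RegEq cmax) r } := Finite.of_injective _ hinj
  refine ⟨inferInstance, ?_⟩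
  rw [Nat.card_prod, Nat.card_eq_fintype_card (α := Q), ← card_regionSignature]
  exact Nat.mul_le_mul_left _ (Nat.card_le_card_of_injective _ hinj)

/-- The existential region automaton of an ECTA with `m` locations, alphabet `Σ` and
maximal constant `cmax` is finite, with at most `m · R(2|Σ|, cmax+1)` states. -/
theorem existential_region_automaton_size
    (α Q : Type) [DecidableEq α] [Fintype α] [Fintype Q] (cmax : ℕ) :
    Finite (Q × { r : Set (Val α) // IsRegionOf (RegEq cmax) r }) ∧
    Nat.card (Q × { r : Set (Val α) // IsRegionOf (RegEq cmax) r }) ≤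
      Fintype.card Q * Rbound (2 * Fintype.card α) (cmax + 1) :=
  existential_region_automaton_size_general α Q cmax
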